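/- Let j, ω ∈ ℂ satisfy j⁴ = 1 and ω³ = i^{n/2} j⁻¹ (with i^{n/2} = e^{πin/4}). Then the operators S' = j·ℱ_E and T' = ω·𝒢_E⁻¹ acting on Schwartz functions on E satisfy the SL(2,ℤ) relations S'⁴ = Id and S'² = (S'T')³. -/

import Mathlib

open MeasureTheory Complex
open scoped Real RealInnerProductSpace BigOperators

noncomputable section

/-- `ℝⁿ` as a Euclidean space. -/
abbrev EN (n : ℕ) := EuclideanSpace ℝ (Fin n)

/-- The operator `S' = j·ℱ_E`, where `ℱ_E(f)(θ) = ∫_E f(θ̃) e^{2πi⟨θ,θ̃⟩} dθ̃`. -/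
def Sprime {n : ℕ} (j : ℂ) (g : EN n → ℂ) : EN n → ℂ :=
  fun θ => j * ∫ θt : EN n, g θt * Complex.exp (2 * (π : ℂ) * I * (⟪θ, θt⟫ : ℂ))

/-- The operator `T' = ω·𝒢_E⁻¹`, i.e. `T'(f)(θ) = ω e^{-πi⟨θ,θ⟩} f(θ)`. -/
def Tprime {n : ℕ} (ω : ℂ) (g : EN n → ℂ) : EN n → ℂ :=
  fun θ => ω * Complex.exp (-(π : ℂ) * I * (⟪θ, θ⟫ : ℂ)) * g θ

open Filter Topology
open scoped FourierTransform SchwartzMap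

/-!
Write `𝓕⁻` for Mathlib's inverse Fourier transform, whose kernel `e^{2πi⟨x,ξ⟩}` is that of `ℱ_E`,
and `chirp x = e^{-πi‖x‖²}`, so that `S' = j 𝓕⁻` and `T' = ω chirp`. Then `S'² = j² 𝓕⁻²`, and
`𝓕⁻⁴ = id` on Schwartz functions gives `S'⁴ = j⁴ = 1`.

For the second relation, `chirp · 𝓕⁻ (chirp · u)` is the convolution `u ⋆ chirp`, and the Fourier
transform of the chirp is `e^{-πin/4}` times its inverse. Hence
`chirp · 𝓕⁻ · chirp · 𝓕⁻ · chirp = e^{-πin/4} 𝓕⁻` on Schwartz functions, and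
`(S'T')³ = j³ω³ e^{-πin/4} 𝓕⁻² = S'²`. The chirp is not integrable: the convolution identity is
the limit `z → i` of the same identity for the Gaussians `e^{-πz‖x‖²}`, `Re z > 0`, whose Fourier
transforms are `z^{-n/2} e^{-π‖ξ‖²/z}`; dominated convergence applies since all these Gaussians
have modulus at most `1`.
-/

theorem iteratedDeriv_cexp_ofReal_mul_I (n : ℕ) :
    iteratedDeriv n (fun t : ℝ => cexp (t * I)) = fun t : ℝ => I ^ n * cexp (t * I) := by
  induction n with
  | zero => simp
  | succ n ih =>
    rw [iteratedDeriv_succ, ih]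
    ext t
    have := ((hasDerivAt_id (t : ℂ)).mul_const I).cexp.comp_ofReal
    simp only [id, one_mul] at this
    rw [deriv_const_mul _ this.differentiableAt, this.deriv]
    ring

theorem hasTemperateGrowth_cexp_ofReal_mul_I :
    (fun t : ℝ => cexp (t * I)).HasTemperateGrowth := by
  refine ⟨(ofRealCLM.contDiff.mul contDiff_const).cexp, fun n => ⟨0, 1, fun t => ?_⟩⟩
  rw [norm_iteratedFDeriv_eq_norm_iteratedDeriv, iteratedDeriv_cexp_ofReal_mul_I]
  simp [norm_exp]

theorem re_ofReal_div_pos {a : ℝ} (ha : 0 < a) {z : ℂ} (hz : 0 < z.re) :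
    0 < ((a : ℂ) / z).re := by
  have hz0 : z ≠ 0 := by rintro rfl; simp at hz
  rw [div_eq_mul_inv, re_ofReal_mul, inv_re]
  exact mul_pos ha (div_pos hz (normSq_pos.2 hz0))

theorem I_cpow_eq_cexp (c : ℂ) : I ^ c = cexp (π * I * c / 2) := by
  rw [cpow_def_of_ne_zero I_ne_zero, log_I]
  ring_nf

theorem tendsto_integral_mul_cexp_neg_mul_sq {α X : Type*} [MeasurableSpace X] {μ : Measure X}
    {l : Filter α} [l.IsCountablyGenerated] {w : α → ℂ} {b : ℂ} (hw : Tendsto w l (𝓝 b))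
    (hre : ∀ᶠ a in l, 0 ≤ (w a).re) {v : X → ℂ} (hv : Integrable v μ) {r : X → ℝ}
    (hr : Measurable r) :
    Tendsto (fun a => ∫ x, v x * cexp (-w a * r x ^ 2) ∂μ) l
      (𝓝 (∫ x, v x * cexp (-b * r x ^ 2) ∂μ)) := by
  refine tendsto_integral_filter_of_dominated_convergence (fun x => ‖v x‖)
    (Eventually.of_forall fun a => hv.1.mul ?_) ?_ hv.norm
    (Eventually.of_forall fun x => ?_)
  · exact (measurable_const.mul ((measurable_ofReal.comp hr).pow_const 2)).cexp.aestronglyMeasurable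
  · filter_upwards [hre] with a ha
    refine Eventually.of_forall fun x => ?_
    rw [norm_mul, norm_exp]
    refine mul_le_of_le_one_right (norm_nonneg _) (Real.exp_le_one_iff.2 ?_)
    rw [← ofReal_pow, re_mul_ofReal, neg_re]
    exact mul_nonpos_of_nonpos_of_nonneg (neg_nonpos.2 ha) (sq_nonneg _)
  · exact ((hw.neg.mul_const _).cexp).const_mul _

section

variable {V : Type*} [NormedAddCommGroup V]

def chirp (x : V) : ℂ := cexp (-(π * I) * ‖x‖ ^ 2)

theorem chirp_ne_zero (x : V) : chirp x ≠ 0 := exp_ne_zero _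

variable [InnerProductSpace ℝ V]

theorem hasTemperateGrowth_chirp : (chirp : V → ℂ).HasTemperateGrowth := by
  have h : (chirp : V → ℂ) = (fun t : ℝ => cexp (t * I)) ∘ (fun x => -π * ‖x‖ ^ 2) := by
    ext x; simp only [chirp, Function.comp_apply]; push_cast; ring_nf
  rw [h]
  exact hasTemperateGrowth_cexp_ofReal_mul_I.comp (by fun_prop)

variable [FiniteDimensional ℝ V] [MeasurableSpace V] [BorelSpace V]
  {E : Type*} [NormedAddCommGroup E] [NormedSpace ℂ E]

theorem Real.fourierInv_const_smul (c : ℂ) (g : V → E) : 𝓕⁻ (c • g) = c • 𝓕⁻ g :=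
  VectorFourier.fourierIntegral_const_smul _ _ _ g c

theorem SchwartzMap.fourierInv_fourierInv_coe [CompleteSpace E] (f : 𝓢(V, E)) :
    𝓕⁻ (𝓕⁻ ⇑f) = fun x => f (-x) := by
  ext x
  rw [Real.fourierInv_eq_fourier_neg, ← SchwartzMap.fourierInv_coe, ← SchwartzMap.fourier_coe,
    FourierInvPair.fourier_fourierInv_eq]

theorem SchwartzMap.fourierInv_fourierInv_fourierInv_fourierInv_coe [CompleteSpace E]
    (f : 𝓢(V, E)) : 𝓕⁻ (𝓕⁻ (𝓕⁻ (𝓕⁻ ⇑f))) = ⇑f := by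
  rw [f.fourierInv_fourierInv_coe, Real.fourierInv_eq_fourier_comp_neg (fun x => f (-x))]
  simp only [neg_neg]
  exact f.continuous.fourierInv_fourier_eq f.integrable (𝓕 f).integrable

theorem chirp_mul_fourierInv_chirp_mul (u : V → ℂ) (x : V) :
    chirp x * 𝓕⁻ (chirp * u : V → ℂ) x = ∫ y, u y * chirp (x - y) := by
  rw [Real.fourierInv_eq', ← integral_const_mul]
  refine integral_congr_ae (Eventually.of_forall fun y => ?_)
  simp only [smul_eq_mul, Pi.mul_apply, chirp]
  have hsq : ((‖x - y‖ : ℝ) : ℂ) ^ 2 = (‖x‖ : ℂ) ^ 2 - 2 * (⟪y, x⟫ : ℝ) + (‖y‖ : ℂ) ^ 2 := by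
    rw [← ofReal_pow, norm_sub_sq_real, real_inner_comm]; push_cast; ring
  rw [hsq, mul_comm (u y), ← mul_assoc, ← mul_assoc, ← exp_add, ← exp_add]
  congr 2
  push_cast
  ring

open Module

theorem cpow_mul_integral_mul_cexp_neg_mul_sq_norm_sub {u : V → ℂ} (hu : Integrable u) {z : ℂ}
    (hz : 0 < z.re) (x : V) :
    z ^ (finrank ℝ V / 2 : ℂ) * ∫ y, u y * cexp (-(π * z) * ‖x - y‖ ^ 2) =
      ∫ ξ, 𝓕 u ξ * cexp (-(π / z) * ‖ξ‖ ^ 2 + 2 * π * I * ⟪x, ξ⟫) := by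
  have hb := re_ofReal_div_pos Real.pi_pos hz
  have hz0 : z ≠ 0 := by rintro rfl; simp at hz
  have hπ : (π : ℂ) ≠ 0 := ofReal_ne_zero.2 Real.pi_ne_zero
  have hg := GaussianFourier.integrable_cexp_neg_mul_sq_norm_add hb (2 * π * I) x
  have hflip := VectorFourier.integral_fourierIntegral_smul_eq_flip (L := innerₗ V)
    Real.continuous_fourierChar continuous_inner hu hg
  have hFg : ∀ y, VectorFourier.fourierIntegral 𝐞 volume (innerₗ V).flip
      (fun v : V => cexp (-(π / z) * ‖v‖ ^ 2 + 2 * π * I * ⟪x, v⟫)) y =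
        z ^ (finrank ℝ V / 2 : ℂ) * cexp (-(π * z) * ‖x - y‖ ^ 2) := by
    intro y
    have := fourier_gaussian_innerProductSpace' hb x y
    rw [Real.fourier_eq] at this
    simp only [VectorFourier.fourierIntegral, LinearMap.flip_apply, innerₗ_apply_apply]
    simp_rw [real_inner_comm _ y, this]
    congr 2
    · field_simp
    · field_simp
  simp only [smul_eq_mul, hFg] at hflip
  rw [← integral_const_mul]
  simp_rw [mul_left_comm _ (u _)]
  exact hflip.symm

theorem cexp_mul_integral_mul_chirp_sub {u : V → ℂ} (hu : Integrable u)
    (hFu : Integrable (𝓕 u)) (x : V) :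
    cexp (π * I * finrank ℝ V / 4) * ∫ y, u y * chirp (x - y) =
      𝓕⁻ (fun ξ => (chirp ξ)⁻¹ * 𝓕 u ξ) x := by
  set l := 𝓝[{z : ℂ | 0 < z.re}] I
  have : l.NeBot := mem_closure_iff_nhdsWithin_neBot.1 (by simp [closure_setOfPred_lt_re])
  have hl : Tendsto id l (𝓝 I) := nhdsWithin_le_nhds
  have hre : ∀ᶠ z in l, 0 < z.re := self_mem_nhdsWithin
  have hlhs : Tendsto (fun z => z ^ (finrank ℝ V / 2 : ℂ) *
      ∫ y, u y * cexp (-(π * z) * ‖x - y‖ ^ 2)) l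
      (𝓝 (I ^ (finrank ℝ V / 2 : ℂ) * ∫ y, u y * chirp (x - y))) := by
    refine ((continuousAt_cpow_const (Or.inr (by simp))).tendsto.comp hl).mul ?_
    exact tendsto_integral_mul_cexp_neg_mul_sq (hl.const_mul _)
      (hre.mono fun z hz => by simpa using mul_nonneg Real.pi_pos.le hz.le) hu
      (continuous_const.sub continuous_id).norm.measurable
  have hphase : Integrable (fun ξ => 𝓕 u ξ * cexp (2 * π * I * ⟪x, ξ⟫)) := by
    refine ((Real.fourierIntegral_convergent_iff (-x)).2 hFu).congr
      (Eventually.of_forall fun ξ => ?_)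
    simp only [Circle.smul_def, Real.fourierChar_apply, inner_neg_right, neg_neg,
      real_inner_comm x, smul_eq_mul]
    push_cast
    ring_nf
  have hrhs : Tendsto (fun z => ∫ ξ, 𝓕 u ξ * cexp (-(π / z) * ‖ξ‖ ^ 2 + 2 * π * I * ⟪x, ξ⟫)) l
      (𝓝 (𝓕⁻ (fun ξ => (chirp ξ)⁻¹ * 𝓕 u ξ) x)) := by
    have := tendsto_integral_mul_cexp_neg_mul_sq (w := fun z : ℂ => π / z)
      (tendsto_const_nhds.div hl I_ne_zero)
      (hre.mono fun z hz => (re_ofReal_div_pos Real.pi_pos hz).le) hphase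
      continuous_norm.measurable
    convert this using 2 with z
    · refine integral_congr_ae (Eventually.of_forall fun ξ => ?_)
      simp only [exp_add]
      ring
    · rw [Real.fourierInv_eq']
      refine integral_congr_ae (Eventually.of_forall fun ξ => ?_)
      simp only [chirp, ← exp_neg, smul_eq_mul, div_I, real_inner_comm x]
      push_cast
      ring_nf
  refine tendsto_nhds_unique ?_ hrhs
  rw [show cexp (π * I * finrank ℝ V / 4) = I ^ (finrank ℝ V / 2 : ℂ) by
    rw [I_cpow_eq_cexp]; ring_nf]
  refine hlhs.congr' (hre.mono fun z hz => ?_)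
  exact cpow_mul_integral_mul_cexp_neg_mul_sq_norm_sub hu hz x

theorem chirp_mul_fourierInv_chirp_mul_fourierInv_chirp_mul (f : 𝓢(V, ℂ)) :
    chirp * 𝓕⁻ (chirp * 𝓕⁻ (chirp * ⇑f)) = cexp (-(π * I * finrank ℝ V / 4)) • 𝓕⁻ ⇑f := by
  set g : 𝓢(V, ℂ) := SchwartzMap.smulLeftCLM ℂ chirp f
  set u : 𝓢(V, ℂ) := 𝓕⁻ g
  have hg : ⇑g = chirp * ⇑f := SchwartzMap.smulLeftCLM_apply hasTemperateGrowth_chirp f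
  have hu : ⇑u = 𝓕⁻ ⇑g := SchwartzMap.fourierInv_coe g
  have hFu : 𝓕 ⇑u = ⇑g := by
    rw [← SchwartzMap.fourier_coe, FourierInvPair.fourier_fourierInv_eq]
  have hf : (fun ξ => (chirp ξ)⁻¹ * 𝓕 ⇑u ξ) = ⇑f := by
    ext ξ
    rw [hFu, hg, Pi.mul_apply, inv_mul_cancel_left₀ (chirp_ne_zero ξ)]
  have key := cexp_mul_integral_mul_chirp_sub u.integrable (hFu ▸ g.integrable)
  ext x
  rw [← hg, ← hu, Pi.mul_apply, chirp_mul_fourierInv_chirp_mul, Pi.smul_apply, smul_eq_mul, ← hf,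
    ← key, ← mul_assoc, ← exp_add, neg_add_cancel, exp_zero, one_mul]

end

theorem Sprime_eq_smul_fourierInv {n : ℕ} (j : ℂ) (g : EN n → ℂ) : Sprime j g = j • 𝓕⁻ g := by
  ext θ
  rw [Sprime, Pi.smul_apply, smul_eq_mul, Real.fourierInv_eq']
  congr 1
  refine integral_congr_ae (Eventually.of_forall fun θt => ?_)
  simp only [smul_eq_mul, real_inner_comm θ]
  push_cast
  ring_nf

theorem Tprime_eq_smul_chirp_mul {n : ℕ} (ω : ℂ) (g : EN n → ℂ) :
    Tprime ω g = ω • (chirp * g) := by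
  ext θ
  simp only [Tprime, chirp, Pi.smul_apply, Pi.mul_apply, smul_eq_mul, real_inner_self_eq_norm_sq]
  push_cast
  ring_nf

/-- if `j⁴ = 1` and `ω³ = i^{n/2} j⁻¹` (with `i^{n/2} = e^{πin/4}`),
then the operators `S' = j·ℱ_E` and `T' = ω·𝒢_E⁻¹` acting on Schwartz functions on
`E` satisfy the `SL(2,ℤ)` relations `S'⁴ = Id` and `S'² = (S'T')³`. -/
theorem Sprime_Tprime_SL2Z_relations
    (n : ℕ) (j ω : ℂ) (hj : j ^ 4 = 1)
    (hω : ω ^ 3 = Complex.exp ((π : ℂ) * I * (n : ℂ) / 4) * j⁻¹)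
    (f : SchwartzMap (EN n) ℂ) :
    ∀ θ : EN n,
      ((Sprime j)^[4] ⇑f) θ = f θ ∧
      ((Sprime j)^[2] ⇑f) θ = ((fun g => Sprime j (Tprime ω g))^[3] ⇑f) θ := by
  have hS : ∀ g : EN n → ℂ, Sprime j g = j • 𝓕⁻ g := Sprime_eq_smul_fourierInv j
  have hS2 : ∀ g : EN n → ℂ, (Sprime j)^[2] g = j ^ 2 • 𝓕⁻ (𝓕⁻ g) := fun g => by
    simp only [Function.iterate_succ_apply', Function.iterate_zero_apply, hS,
      Real.fourierInv_const_smul, smul_smul, sq]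
  have hST : (fun g => Sprime j (Tprime ω g))^[3] ⇑f =
      (j * ω) ^ 3 • 𝓕⁻ (chirp * 𝓕⁻ (chirp * 𝓕⁻ (chirp * ⇑f))) := by
    simp only [Function.iterate_succ_apply', Function.iterate_zero_apply, hS,
      Tprime_eq_smul_chirp_mul, Real.fourierInv_const_smul, mul_smul_comm, smul_smul]
    rw [pow_succ', pow_succ', pow_one]
  have hj0 : j ≠ 0 := by rintro rfl; norm_num at hj
  have hscalar : (j * ω) ^ 3 * cexp (-(π * I * n / 4)) = j ^ 2 := by
    rw [mul_pow, hω, exp_neg]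
    field_simp
  intro θ
  constructor
  · rw [show 4 = 2 + 2 from rfl, Function.iterate_add_apply, hS2, hS2,
      Real.fourierInv_const_smul, Real.fourierInv_const_smul,
      f.fourierInv_fourierInv_fourierInv_fourierInv_coe, smul_smul, ← pow_add, hj, one_smul]
  · rw [hS2, hST, chirp_mul_fourierInv_chirp_mul_fourierInv_chirp_mul, finrank_euclideanSpace_fin,
      Real.fourierInv_const_smul, smul_smul, hscalar]

end
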